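/- arXiv:1610.02191 — 2 statements merged into one kernel-verified Lean document; each statement's English description precedes it below -/
import Mathlib

section
/- In ZF with excluded middle, a regular set I modeling the relevant closure conditions is closed under images of functions: if A ∈ I, R ⊆ A × I is a function (i.e., ∀ x ∈ A ∃! y, ⟨x,y⟩ ∈ R viewed as R : A → I), then the image of R is an element of I. -/
/-- A transitive set `A` is regular: for every `a ∈ A` and every (class)
relation `R` with `∀ x ∈ a, ∃ y ∈ A, R x y`, there is `b ∈ A` which is a
"collection" witness for `R` on `a`. -/
def IsRegularSet (A : ZFSet) : Prop :=
  A.IsTransitive ∧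
    ∀ a ∈ A, ∀ R : ZFSet → ZFSet → Prop,
      (∀ x ∈ a, ∃ y ∈ A, R x y) →
      ∃ b ∈ A, (∀ x ∈ a, ∃ y ∈ b, R x y) ∧ (∀ y ∈ b, ∃ x ∈ a, R x y)

/-- A regular set is closed under images of functions: if `a ∈ A` and
`f : a → A`, then the image `f[a]` is an element of `A`. -/
theorem regular_closed_under_images (A : ZFSet) (hA : IsRegularSet A)
    (a : ZFSet) (ha : a ∈ A) (f : ZFSet → ZFSet)
    (hf : ∀ x ∈ a, f x ∈ A) :
    ZFSet.sep (fun y => ∃ x ∈ a, f x = y) A ∈ A := by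
  obtain ⟨htrans, hreg⟩ := hA
  obtain ⟨b, hbA, h1, h2⟩ := hreg a ha (fun x y => f x = y)
    (fun x hx => ⟨f x, hf x hx, rfl⟩)
  have : ZFSet.sep (fun y => ∃ x ∈ a, f x = y) A = b := by
    ext y
    simp only [ZFSet.mem_sep]
    constructor
    · rintro ⟨-, x, hx, rfl⟩
      obtain ⟨y', hy', rfl⟩ := h1 x hx
      exact hy'
    · intro hy
      refine ⟨htrans b hbA hy, h2 y hy⟩
  rw [this]; exact hbA
end

section
/- Transfinite recursion on the well-founded part: if WP_U(X,Y) holds and for every n ∈ Y and every set W there is a unique V with ψ(n,W,V), then there exists Z such that for all n ∈ Y, ψ(n, ⋃{(Z)_k : k ≺_X n}, (Z)_n). -/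
/-- `Prog U X Y`: `Y` is progressive on `U` w.r.t. the relation coded by `X`. -/
def Prog (U X Y : Set ℕ) : Prop :=
  ∀ n ∈ U, (∀ k, Nat.pair k n ∈ X → k ∈ Y) → n ∈ Y

/-- `WP U X Y`: `Y` is the well-founded part of `≺_X` on `U`. -/
def WP (U X Y : Set ℕ) : Prop :=
  Prog U X Y ∧ ∀ Z : Set ℕ, Prog U X Z → Y ⊆ Z

/-- The `n`-th section of `Z`. -/
def sect (Z : Set ℕ) (n : ℕ) : Set ℕ := {y | Nat.pair n y ∈ Z}

/-- Transfinite recursion on the well-founded part: if `ψ(n, W, ·)` has a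
unique value for each `n ∈ Y` and each `W`, then there is a set `Z` whose
sections satisfy the recursion along `≺_X`. -/
theorem transfinite_recursion_wp (U X Y : Set ℕ) (hY : WP U X Y)
    (ψ : ℕ → Set ℕ → Set ℕ → Prop)
    (huniq : ∀ n ∈ Y, ∀ W : Set ℕ, ∃! V : Set ℕ, ψ n W V) :
    ∃ Z : Set ℕ, ∀ n ∈ Y,
      ψ n {y | ∃ k, Nat.pair k n ∈ X ∧ y ∈ sect Z k} (sect Z n) := by
  classical
  obtain ⟨hprog, hmin⟩ := hY
  set r : ℕ → ℕ → Prop := fun k n => n ∈ Y ∧ Nat.pair k n ∈ X with hrdef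
  have hwf : WellFounded r := by
    constructor
    intro n
    by_cases hn : n ∈ Y
    · have hsub : Y ⊆ {m | Acc r m} := by
        apply hmin
        intro m _ hih
        exact Acc.intro m fun k hk => hih k hk.2
      exact hsub hn
    · exact Acc.intro n fun k hk => absurd hk.1 hn
  set f : ℕ → Set ℕ := hwf.fix (fun n IH =>
    if h : n ∈ Y then
      (huniq n h {y | ∃ k, ∃ hk : Nat.pair k n ∈ X, y ∈ IH k ⟨h, hk⟩}).choose
    else ∅) with hfdef
  have hfix : ∀ n, f n = (if h : n ∈ Y then
      (huniq n h {y | ∃ k, ∃ hk : Nat.pair k n ∈ X, y ∈ f k}).choose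
    else ∅) := by
    intro n
    rw [hfdef, hwf.fix_eq]
  refine ⟨{m | m.unpair.2 ∈ f m.unpair.1}, ?_⟩
  have hsect : ∀ n, sect {m | m.unpair.2 ∈ f m.unpair.1} n = f n := by
    intro n
    ext y
    simp [sect, Nat.unpair_pair]
  intro n hn
  have h1 := hfix n
  rw [dif_pos hn] at h1
  have hW : {y | ∃ k, Nat.pair k n ∈ X ∧ y ∈ sect {m | m.unpair.2 ∈ f m.unpair.1} k}
      = {y | ∃ k, ∃ _ : Nat.pair k n ∈ X, y ∈ f k} := by
    ext y
    simp [hsect]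
  rw [hW, hsect n, h1]
  exact (huniq n hn _).choose_spec.1
end
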